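/- For a biisotropic constitutive matrix M = [[κI, χI],[γI, νI]] with scalars κ,ν,χ,γ and κ ≠ 0, the characteristic polynomial satisfies det(p₀·I₆ − J(p)·M) = p₀² · ( (p₀² − |p|²(κν − χγ))² + p₀²|p|²(χ−γ)² ). -/

import Mathlib

/-!
All four blocks of `p₀ • 1 - bigJ p * M` are polynomials in `A = crossMat p`, so they commute and
the `6 × 6` determinant is the `3 × 3` determinant of
`(p₀ + γA)(p₀ - χA) + κν A² = p₀² + p₀(γ - χ) A + (κν - γχ) A²`.
As `A` has eigenvalues `0, ±i|p|`, the determinant of `a + bA + cA²` is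
`a ((a - c|p|²)² + b²|p|²)`.
-/

/-- The antisymmetric matrix `p_ρ A^ρ` representing `v ↦ p × v`. -/
def crossMat (p : Fin 3 → ℝ) : Matrix (Fin 3) (Fin 3) ℝ :=
  !![0, -p 2, p 1; p 2, 0, -p 0; -p 1, p 0, 0]

/-- The 6×6 antisymmetric block matrix `J(p) = [[0, -p_ρA^ρ],[p_ρA^ρ, 0]]`. -/
def bigJ (p : Fin 3 → ℝ) : Matrix (Fin 3 ⊕ Fin 3) (Fin 3 ⊕ Fin 3) ℝ :=
  Matrix.fromBlocks 0 (-(crossMat p)) (crossMat p) 0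

namespace Matrix

variable {R n : Type*} [CommRing R] [Fintype n] [DecidableEq n]

theorem det_fromBlocks_mul_det_of_commute (A B C D : Matrix n n R) (hCD : Commute C D) :
    (fromBlocks A B C D).det * D.det = (A * D - B * C).det * D.det := by
  have h : fromBlocks A B C D * fromBlocks D 0 (-C) 1 = fromBlocks (A * D - B * C) B 0 D := by
    rw [fromBlocks_multiply, hCD.eq]
    simp [sub_eq_add_neg]
  simpa [det_fromBlocks_zero₁₂, det_fromBlocks_zero₂₁] using congrArg det h

/-- Replacing `D` by `charmatrix (-D) = D + X` over `R[X]` makes its determinant monic, hence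
cancellable; evaluating at `X = 0` then gives the identity over `R`. -/
theorem det_fromBlocks_of_commute (A B C D : Matrix n n R) (hCD : Commute C D) :
    (fromBlocks A B C D).det = (A * D - B * C).det := by
  set Dₓ := charmatrix (-D)
  have hCDₓ : Commute (C.map Polynomial.C) Dₓ := by
    simp only [Dₓ, charmatrix, map_neg, sub_neg_eq_add]
    exact .add_right (scalar_commute _ (fun _ => .all _ _) _).symm
      (hCD.map (Polynomial.C : R →+* Polynomial R).mapMatrix)
  have hpoly :=
    det_fromBlocks_mul_det_of_commute (A.map Polynomial.C) (B.map Polynomial.C) _ _ hCDₓ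
  change _ * (-D).charpoly = _ * (-D).charpoly at hpoly
  rw [← sub_eq_zero, ← sub_mul, (charpoly_monic _).mul_left_eq_zero_iff, sub_eq_zero] at hpoly
  have hDₓ : Dₓ.map (Polynomial.eval 0) = D := by
    ext i j
    by_cases hij : i = j <;> simp [Dₓ, hij]
  have h := congrArg (Polynomial.evalRingHom 0) hpoly
  simp only [RingHom.map_det, map_sub, map_mul, RingHom.mapMatrix_apply,
    Polynomial.coe_evalRingHom, fromBlocks_map, Matrix.map_map] at h
  simpa [Function.comp_def, hDₓ] using h

end Matrix

open Matrix

theorem det_smul_one_add_smul_crossMat_add_smul_sq (a b c : ℝ) (p : Fin 3 → ℝ) :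
    (a • 1 + b • crossMat p + c • crossMat p ^ 2).det =
      a * ((a - c * ∑ i, p i ^ 2) ^ 2 + b ^ 2 * ∑ i, p i ^ 2) := by
  simp only [crossMat, Fin.isValue, smul_of, smul_cons, smul_eq_mul, mul_zero, mul_neg, smul_empty,
    sq, cons_mul, Nat.succ_eq_add_one, Nat.reduceAdd, vecMul_cons, head_cons, zero_smul, tail_cons,
    neg_smul, neg_cons, neg_zero, neg_neg, neg_empty, empty_vecMul, add_zero, add_cons, zero_add,
    empty_add_empty, empty_mul, Equiv.symm_apply_apply, det_fin_three, Matrix.add_apply,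
    Matrix.smul_apply, one_apply, ↓reduceIte, mul_one, of_apply, cons_val', cons_val_zero,
    cons_val_fin_one, cons_val_one, cons_val, Fin.reduceEq, zero_ne_one, one_ne_zero,
    Fin.sum_univ_three]
  ring

theorem sub_bigJ_mul_fromBlocks_smul_one (κ χ γ ν p₀ : ℝ) (p : Fin 3 → ℝ) :
    p₀ • (1 : Matrix (Fin 3 ⊕ Fin 3) (Fin 3 ⊕ Fin 3) ℝ) -
        bigJ p * fromBlocks (κ • (1 : Matrix (Fin 3) (Fin 3) ℝ)) (χ • 1) (γ • 1) (ν • 1) =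
      fromBlocks (p₀ • 1 + γ • crossMat p) (ν • crossMat p) (-(κ • crossMat p))
        (p₀ • 1 - χ • crossMat p) := by
  rw [bigJ, fromBlocks_multiply, ← fromBlocks_one, fromBlocks_smul, sub_eq_add_neg,
    fromBlocks_neg, fromBlocks_add]
  simp [sub_eq_add_neg]

theorem stmt_14_general (κ χ γ ν : ℝ) (p₀ : ℝ) (p : Fin 3 → ℝ) :
    (p₀ • (1 : Matrix (Fin 3 ⊕ Fin 3) (Fin 3 ⊕ Fin 3) ℝ) -
        bigJ p * Matrix.fromBlocks (κ • (1 : Matrix (Fin 3) (Fin 3) ℝ)) (χ • 1) (γ • 1) (ν • 1)).det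
      = p₀ ^ 2 *
        ((p₀ ^ 2 - (∑ i, p i ^ 2) * (κ * ν - χ * γ)) ^ 2 +
          p₀ ^ 2 * (∑ i, p i ^ 2) * (χ - γ) ^ 2) := by
  set A := crossMat p
  have hcomm : Commute (-(κ • A)) (p₀ • 1 - χ • A) :=
    (((Commute.one_right A).smul_right p₀).sub_right
      ((Commute.refl A).smul_right χ)).smul_left κ |>.neg_left
  have hschur : (p₀ • 1 + γ • A) * (p₀ • 1 - χ • A) - ν • A * -(κ • A) =
      p₀ ^ 2 • 1 + (p₀ * (γ - χ)) • A + (κ * ν - γ * χ) • A ^ 2 := by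
    simp only [add_mul, mul_sub, smul_mul_smul, mul_neg, one_mul, mul_one, sq]
    module
  rw [sub_bigJ_mul_fromBlocks_smul_one, det_fromBlocks_of_commute _ _ _ _ hcomm, hschur,
    det_smul_one_add_smul_crossMat_add_smul_sq]
  ring

theorem stmt_14 (κ χ γ ν : ℝ) (hκ : κ ≠ 0) (p₀ : ℝ) (p : Fin 3 → ℝ) :
    (p₀ • (1 : Matrix (Fin 3 ⊕ Fin 3) (Fin 3 ⊕ Fin 3) ℝ) -
        bigJ p * Matrix.fromBlocks (κ • (1 : Matrix (Fin 3) (Fin 3) ℝ)) (χ • 1) (γ • 1) (ν • 1)).det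
      = p₀ ^ 2 *
        ((p₀ ^ 2 - (∑ i, p i ^ 2) * (κ * ν - χ * γ)) ^ 2 +
          p₀ ^ 2 * (∑ i, p i ^ 2) * (χ - γ) ^ 2) :=
  stmt_14_general κ χ γ ν p₀ p
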